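/- Fix real numbers x₀, y₀, z₀ and define affine maps g_T, g_M, g_B into ℝ⁴ by g_T(x_T, y_T) = (3, x₀ + x_T, y₀ + y_T, z₀), g_M(x_M, z_M) = (2, x₀ + x_M, y₀, z₀ + z_M), and g_B(y_B, z_B) = (1, x₀, y₀ + y_B, z₀ + z_B). Then the map (ℝ × ℝ) × (ℝ × ℝ) × (ℝ × ℝ) → ℝ⁴ × ℝ⁴ sending ((x_T,y_T),(x_M,z_M),(y_B,z_B)) to ( ‖g_T(x_T,y_T) − g_M(x_M,z_M)‖⁻¹ • (g_T(x_T,y_T) − g_M(x_M,z_M)), ‖g_M(x_M,z_M) − g_B(y_B,z_B)‖⁻¹ • (g_M(x_M,z_M) − g_B(y_B,z_B)) ) is injective. -/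

import Mathlib

/-- The point of `ℝ⁴ = EuclideanSpace ℝ (Fin 4)` with coordinates `a, b, c, d`
at the indices `0, 1, 2, 3`. -/
noncomputable def pt (a b c d : ℝ) : EuclideanSpace ℝ (Fin 4) :=
  (WithLp.equiv 2 (Fin 4 → ℝ)).symm ![a, b, c, d]

/-- The standard affine local form of the top sheet around a triple point. -/
noncomputable def gT (x₀ y₀ z₀ : ℝ) (xT yT : ℝ) : EuclideanSpace ℝ (Fin 4) :=
  pt 3 (x₀ + xT) (y₀ + yT) z₀

/-- The standard affine local form of the middle sheet around a triple point. -/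
noncomputable def gM (x₀ y₀ z₀ : ℝ) (xM zM : ℝ) : EuclideanSpace ℝ (Fin 4) :=
  pt 2 (x₀ + xM) y₀ (z₀ + zM)

/-- The standard affine local form of the bottom sheet around a triple point. -/
noncomputable def gB (x₀ y₀ z₀ : ℝ) (yB zB : ℝ) : EuclideanSpace ℝ (Fin 4) :=
  pt 1 x₀ (y₀ + yB) (z₀ + zB)

/-!
The sheets lie at heights 3, 2, 1 in the first coordinate, so both difference vectors lie in the
affine hyperplane `{w | w 0 = 1}`, on which normalization `w ↦ ‖w‖⁻¹ • w` is injective. The two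
differences `(1, xT - xM, yT, -zM)` and `(1, xM, -yB, zM - zB)` in turn determine all six
parameters.
-/

theorem eq_of_inv_norm_smul_eq_of_map_eq {E : Type*} [NormedAddCommGroup E] [NormedSpace ℝ E]
    (f : E →ₗ[ℝ] ℝ) {u v : E} (hfu : f u ≠ 0) (hf : f u = f v)
    (h : ‖u‖⁻¹ • u = ‖v‖⁻¹ • v) : u = v := by
  have hv : v ≠ 0 := by rintro rfl; simp_all
  have hnorm : ‖u‖⁻¹ = ‖v‖⁻¹ := by
    have := congrArg f h
    rw [map_smul, map_smul, smul_eq_mul, smul_eq_mul, ← hf] at this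
    exact mul_right_cancel₀ hfu this
  rw [hnorm] at h
  exact smul_right_injective E (inv_ne_zero (norm_ne_zero_iff.mpr hv)) h

theorem pt_sub_pt (a b c d a' b' c' d' : ℝ) :
    pt a b c d - pt a' b' c' d' = pt (a - a') (b - b') (c - c') (d - d') := by
  ext i; fin_cases i <;> rfl

theorem pt_inj {a b c d a' b' c' d' : ℝ} :
    pt a b c d = pt a' b' c' d' ↔ a = a' ∧ b = b' ∧ c = c' ∧ d = d' := by
  simp [pt]

theorem gT_sub_gM (x₀ y₀ z₀ xT yT xM zM : ℝ) :
    gT x₀ y₀ z₀ xT yT - gM x₀ y₀ z₀ xM zM = pt 1 (xT - xM) yT (-zM) := by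
  rw [gT, gM, pt_sub_pt]; congr 1 <;> ring

theorem gM_sub_gB (x₀ y₀ z₀ xM zM yB zB : ℝ) :
    gM x₀ y₀ z₀ xM zM - gB x₀ y₀ z₀ yB zB = pt 1 xM (-yB) (zM - zB) := by
  rw [gM, gB, pt_sub_pt]; congr 1 <;> ring

theorem pt_one_eq_of_inv_norm_smul_eq {b c d b' c' d' : ℝ}
    (h : ‖pt 1 b c d‖⁻¹ • pt 1 b c d = ‖pt 1 b' c' d'‖⁻¹ • pt 1 b' c' d') :
    b = b' ∧ c = c' ∧ d = d' := by
  have hpt : pt 1 b c d = pt 1 b' c' d' :=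
    eq_of_inv_norm_smul_eq_of_map_eq (EuclideanSpace.proj (0 : Fin 4)).toLinearMap
      one_ne_zero rfl h
  exact (pt_inj.mp hpt).2

/-- the restriction `L′` of the Gauss-type map to the standard affine local
sheets `D_T² × D_M² × D_B²` around a triple point of the projection is injective. -/
theorem gauss_map_local_restriction_injective (x₀ y₀ z₀ : ℝ) :
    Function.Injective (fun p : (ℝ × ℝ) × (ℝ × ℝ) × (ℝ × ℝ) =>
      ((‖gT x₀ y₀ z₀ p.1.1 p.1.2 - gM x₀ y₀ z₀ p.2.1.1 p.2.1.2‖⁻¹ •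
          (gT x₀ y₀ z₀ p.1.1 p.1.2 - gM x₀ y₀ z₀ p.2.1.1 p.2.1.2),
        ‖gM x₀ y₀ z₀ p.2.1.1 p.2.1.2 - gB x₀ y₀ z₀ p.2.2.1 p.2.2.2‖⁻¹ •
          (gM x₀ y₀ z₀ p.2.1.1 p.2.1.2 - gB x₀ y₀ z₀ p.2.2.1 p.2.2.2)) :
        EuclideanSpace ℝ (Fin 4) × EuclideanSpace ℝ (Fin 4))) := by
  rintro ⟨⟨xT, yT⟩, ⟨xM, zM⟩, ⟨yB, zB⟩⟩ ⟨⟨xT', yT'⟩, ⟨xM', zM'⟩, ⟨yB', zB'⟩⟩ h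
  simp only [gT_sub_gM, gM_sub_gB, Prod.mk.injEq] at h
  obtain ⟨hxTM, hyT, hzM⟩ := pt_one_eq_of_inv_norm_smul_eq h.1
  obtain ⟨hxM, hyB, hzMB⟩ := pt_one_eq_of_inv_norm_smul_eq h.2
  simp only [Prod.mk.injEq]
  refine ⟨⟨?_, hyT⟩, ⟨hxM, ?_⟩, ?_, ?_⟩ <;> linarith
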